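/- For vectors a, b ∈ {0,1}^d, the string VG'(b) can be derived from the regular expression VG(a) if and only if a·b = 0, where VG(a) = CG(a₁) y CG(a₂) y … y CG(a_d) with CG(0) = x⁺ and CG(1) = x⁺x⁺, and VG'(b) = CG'(b₁) y CG'(b₂) y … y CG'(b_d) with CG'(0) = "xx" and CG'(1) = "x". -/

import Mathlib

open RegularExpression

/-- Kleene plus: one or more repetitions. -/
def plusRE {α : Type*} (P : RegularExpression α) : RegularExpression α := P * P.star

/-- Alphabet `{x, y}` encoded as `Bool`: `x = true`, `y = false`.
Coordinate gadget: `CG 0 = x⁺`, `CG 1 = x⁺x⁺`. -/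
def CG : Bool → RegularExpression Bool
  | false => plusRE (char true)
  | true  => plusRE (char true) * plusRE (char true)

/-- Text coordinate gadget: `CG' 0 = "xx"`, `CG' 1 = "x"`. -/
def CG' : Bool → List Bool
  | false => [true, true]
  | true  => [true]

/-- Pattern vector gadget: coordinate gadgets separated by the literal `y`. -/
def VG {d : ℕ} (a : Fin d → Bool) : RegularExpression Bool :=
  (List.intersperse (char false) (List.ofFn fun j => CG (a j))).prod

/-- Text vector gadget: coordinate strings separated by `y`. -/
def VG' {d : ℕ} (b : Fin d → Bool) : List Bool :=
  List.intercalate [false] (List.ofFn fun j => CG' (b j))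

/-! The separator `y` occurs neither in a coordinate string `CG' bⱼ` nor in any word matched by a
coordinate gadget `CG aⱼ`, so a derivation of `VG' b` from `VG a` must match the `j`-th text block
against the `j`-th gadget. Coordinatewise, `x⁺` matches both `x` and `xx`, while `x⁺x⁺` matches
`xx` but not the single letter `x`. -/

variable {α : Type*}

theorem List.append_cons_inj_of_notMem_prefix {c : α} {s t u v : List α} (hs : c ∉ s)
    (hu : c ∉ u) (h : s ++ c :: t = u ++ c :: v) : s = u ∧ t = v := by
  classical
  have hlen : s.length = u.length := by
    simpa [List.idxOf_append_of_notMem hs, List.idxOf_append_of_notMem hu] using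
      congrArg (List.idxOf c) h
  simpa using List.append_inj h hlen

theorem List.forall₂_ofFn_iff {β : Type*} {R : α → β → Prop} {d : ℕ} {f : Fin d → α}
    {g : Fin d → β} : List.Forall₂ R (List.ofFn f) (List.ofFn g) ↔ ∀ i, R (f i) (g i) := by
  simp [List.forall₂_iff_get, Fin.forall_iff]

theorem Language.append_cons_mem_mul_singleton_mul_iff {L M : Language α} {c : α}
    {u v : List α} (hL : ∀ w ∈ L, c ∉ w) (hu : c ∉ u) :
    u ++ c :: v ∈ L * ({[c]} * M) ↔ u ∈ L ∧ v ∈ M := by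
  constructor
  · rintro ⟨s, hs, _, ⟨_, rfl, t, ht, rfl⟩, h⟩
    obtain ⟨rfl, rfl⟩ := List.append_cons_inj_of_notMem_prefix (hL s hs) hu h
    exact ⟨hs, ht⟩
  · rintro ⟨hu, hv⟩
    exact ⟨u, hu, c :: v, ⟨[c], rfl, v, hv, rfl⟩, rfl⟩

namespace RegularExpression

theorem notMem_of_mem_matches'_star_char {c d : α} (hcd : c ≠ d) {w : List α}
    (hw : w ∈ (char d).star.matches') : c ∉ w := by
  rw [matches'_star, Language.mem_kstar] at hw
  obtain ⟨L, rfl, hL⟩ := hw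
  simp only [List.mem_flatten, not_exists, not_and]
  intro y hy hc
  obtain rfl : y = [d] := hL y hy
  exact hcd (List.mem_singleton.mp hc)

theorem notMem_of_mem_matches'_plusRE_char {c d : α} (hcd : c ≠ d) {w : List α}
    (hw : w ∈ (plusRE (char d)).matches') : c ∉ w := by
  obtain ⟨_, rfl, v, hv, rfl⟩ := hw
  simpa [hcd] using notMem_of_mem_matches'_star_char hcd hv

theorem intercalate_mem_matches'_intersperse_prod_iff {c : α} :
    ∀ {ws : List (List α)} {Ps : List (RegularExpression α)}, (∀ w ∈ ws, c ∉ w) →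
      (∀ P ∈ Ps, ∀ w ∈ P.matches', c ∉ w) → ws.length = Ps.length →
      ([c].intercalate ws ∈ (Ps.intersperse (char c)).prod.matches' ↔
        List.Forall₂ (fun w P => w ∈ P.matches') ws Ps)
  | [], [], _, _, _ => by simp [List.intercalate_nil, matches'_epsilon]
  | [w], [P], _, _, _ => by simp [List.intercalate_singleton]
  | w :: w' :: ws, P :: P' :: Ps, hws, hPs, hlen => by
    rw [List.forall₂_cons, List.intercalate_cons_cons, List.append_assoc, List.singleton_append,
      List.intersperse_cons_cons, List.prod_cons, List.prod_cons, matches'_mul, matches'_mul,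
      matches'_char,
      Language.append_cons_mem_mul_singleton_mul_iff (hPs P (by simp)) (hws w (by simp)),
      intercalate_mem_matches'_intersperse_prod_iff (fun v hv => hws v (by simp [hv]))
        (fun Q hQ => hPs Q (by simp [hQ])) (by simpa using hlen)]
  | [], _ :: _, _, _, hlen | _ :: _, [], _, _, hlen | [_], _ :: _ :: _, _, _, hlen
  | _ :: _ :: _, [_], _, _, hlen => by simp at hlen

end RegularExpression

theorem false_notMem_of_mem_matches'_CG {a : Bool} {w : List Bool}
    (hw : w ∈ (CG a).matches') : false ∉ w := by
  cases a with
  | false => exact notMem_of_mem_matches'_plusRE_char Bool.false_ne_true hw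
  | true =>
    obtain ⟨u, hu, v, hv, rfl⟩ := hw
    simpa using ⟨notMem_of_mem_matches'_plusRE_char Bool.false_ne_true hu,
      notMem_of_mem_matches'_plusRE_char Bool.false_ne_true hv⟩

theorem false_notMem_CG' (b : Bool) : false ∉ CG' b := by
  cases b <;> decide

theorem CG'_mem_matches'_CG_iff {a b : Bool} : CG' b ∈ (CG a).matches' ↔ (a && b) = false := by
  cases a <;> cases b <;> decide

theorem stmt4 {d : ℕ} (a b : Fin d → Bool) :
    VG' b ∈ (VG a).matches' ↔ ∀ j, (a j && b j) = false := by
  rw [VG, VG', intercalate_mem_matches'_intersperse_prod_iff, List.forall₂_ofFn_iff]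
  · simp only [CG'_mem_matches'_CG_iff]
  · simp only [List.mem_ofFn, forall_exists_index]
    rintro _ j rfl
    exact false_notMem_CG' (b j)
  · simp only [List.mem_ofFn, forall_exists_index]
    rintro _ j rfl _
    exact false_notMem_of_mem_matches'_CG
  · simp
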